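/- For all H > 0, λ > 0 and t > 0, the function t^H K_H(λt) satisfies the lower bound t^H K_H(λt) ≥ (2^(H-1) e^(-λt/2) / λ^H) Γ(H, λt/2), where Γ(H, x) = ∫_x^∞ s^(H-1) e^(-s) ds is the upper incomplete Gamma function. -/

import Mathlib

/-!
Put `c = λt/2`. The integrand of `K_H(λt)` is nonnegative, so dropping the range `z < 1` only
decreases the integral; for `z ≥ 1` we have `1/z ≤ 1`, so the factor `exp(-c/z)` is at least
`exp(-c)`. What remains is `exp(-c) ∫_1^∞ z^(H-1) e^(-cz) dz`, which the substitution `s = cz`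
turns into `exp(-c) c^(-H) Γ(H, c)`.
-/

open MeasureTheory Set Real

noncomputable def besselK (ν x : ℝ) : ℝ :=
  (1/2) * ∫ z in Set.Ioi (0:ℝ), z ^ (ν - 1) * Real.exp (-(x/2) * (z + 1/z))

noncomputable def upperGamma (H x : ℝ) : ℝ :=
  ∫ s in Set.Ioi x, s ^ (H - 1) * Real.exp (-s)

lemma integrableOn_rpow_mul_exp_neg_mul {a c : ℝ} (ha : 0 < a) (hc : 0 < c) :
    IntegrableOn (fun z : ℝ => z ^ (a - 1) * exp (-(c * z))) (Ioi 0) := by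
  simpa [neg_mul] using
    integrableOn_rpow_mul_exp_neg_mul_rpow (p := 1) (by linarith : -1 < a - 1) one_pos hc

lemma setIntegral_Ioi_rpow_mul_exp_neg_mul {a c x : ℝ} (hc : 0 < c) (hx : 0 ≤ x) :
    ∫ z in Ioi x, z ^ (a - 1) * exp (-(c * z)) = c ^ (-a) * upperGamma a (c * x) := by
  have hscale : ∀ z ∈ Ioi x,
      z ^ (a - 1) * exp (-(c * z)) = c ^ (1 - a) * ((c * z) ^ (a - 1) * exp (-(c * z))) := by
    intro z hz
    rw [mul_rpow hc.le (hx.trans (le_of_lt hz)), ← mul_assoc, ← mul_assoc, ← rpow_add hc]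
    norm_num
  rw [setIntegral_congr_fun measurableSet_Ioi hscale, integral_const_mul,
    integral_comp_mul_left_Ioi (fun s => s ^ (a - 1) * exp (-s)) x hc, smul_eq_mul,
    ← mul_assoc, upperGamma, ← rpow_neg_one c, ← rpow_add hc]
  ring_nf

section BesselIntegrand

variable {ν x z : ℝ}

lemma besselK_integrand_le (hx : 0 ≤ x) (hz : 0 < z) :
    z ^ (ν - 1) * exp (-(x / 2) * (z + 1 / z)) ≤ z ^ (ν - 1) * exp (-(x / 2 * z)) := by
  have : 0 ≤ x / 2 * (1 / z) := by positivity
  gcongr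
  linarith

lemma exp_neg_mul_le_besselK_integrand (hx : 0 ≤ x) (hz : 1 ≤ z) :
    exp (-(x / 2)) * (z ^ (ν - 1) * exp (-(x / 2 * z)))
      ≤ z ^ (ν - 1) * exp (-(x / 2) * (z + 1 / z)) := by
  have hinv : 1 / z ≤ 1 := by rw [div_le_one (by linarith)]; exact hz
  have : x / 2 * (1 / z) ≤ x / 2 := mul_le_of_le_one_right (by positivity) hinv
  rw [mul_left_comm, ← exp_add]
  gcongr
  linarith

lemma integrableOn_besselK_integrand (hν : 0 < ν) (hx : 0 < x) :
    IntegrableOn (fun z : ℝ => z ^ (ν - 1) * exp (-(x / 2) * (z + 1 / z))) (Ioi 0) := by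
  refine (integrableOn_rpow_mul_exp_neg_mul hν (half_pos hx)).mono' (by fun_prop) ?_
  refine (ae_restrict_iff' measurableSet_Ioi).mpr (ae_of_all _ fun z (hz : 0 < z) => ?_)
  rw [norm_of_nonneg (by positivity)]
  exact besselK_integrand_le hx.le hz

end BesselIntegrand

theorem le_besselK {ν x : ℝ} (hν : 0 < ν) (hx : 0 < x) :
    exp (-(x / 2)) * (x / 2) ^ (-ν) * upperGamma ν (x / 2) / 2 ≤ besselK ν x := by
  set f : ℝ → ℝ := fun z => z ^ (ν - 1) * exp (-(x / 2) * (z + 1 / z))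
  have hf : IntegrableOn f (Ioi 0) := integrableOn_besselK_integrand hν hx
  calc exp (-(x / 2)) * (x / 2) ^ (-ν) * upperGamma ν (x / 2) / 2
      = (1 / 2) * ∫ z in Ioi 1, exp (-(x / 2)) * (z ^ (ν - 1) * exp (-(x / 2 * z))) := by
        rw [integral_const_mul, setIntegral_Ioi_rpow_mul_exp_neg_mul (half_pos hx) zero_le_one,
          mul_one]
        ring
    _ ≤ (1 / 2) * ∫ z in Ioi 1, f z := by
        refine mul_le_mul_of_nonneg_left ?_ one_half_pos.le
        refine setIntegral_mono_on ?_ (hf.mono_set (Ioi_subset_Ioi zero_le_one))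
          measurableSet_Ioi fun z hz => exp_neg_mul_le_besselK_integrand hx.le (le_of_lt hz)
        exact ((integrableOn_rpow_mul_exp_neg_mul hν (half_pos hx)).mono_set
          (Ioi_subset_Ioi zero_le_one)).const_mul _
    _ ≤ (1 / 2) * ∫ z in Ioi 0, f z := by
        refine mul_le_mul_of_nonneg_left ?_ one_half_pos.le
        refine setIntegral_mono_set hf ?_ (Ioi_subset_Ioi zero_le_one).eventuallyLE
        exact (ae_restrict_iff' measurableSet_Ioi).mpr
          (ae_of_all _ fun z (hz : 0 < z) => by positivity)
    _ = besselK ν x := rfl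

theorem stmt_1 (H lam t : ℝ) (hH : 0 < H) (hlam : 0 < lam) (ht : 0 < t) :
    2 ^ (H - 1) * Real.exp (-(lam * t) / 2) / lam ^ H * upperGamma H (lam * t / 2)
      ≤ t ^ H * besselK H (lam * t) := by
  have hscale : (lam * t / 2) ^ (-H) = 2 ^ H / (lam ^ H * t ^ H) := by
    rw [rpow_neg (by positivity), div_rpow (by positivity) zero_le_two,
      mul_rpow hlam.le ht.le, inv_div]
  have hpow : (2 : ℝ) ^ (H - 1) = 2 ^ H / 2 := by rw [rpow_sub two_pos, rpow_one]
  calc 2 ^ (H - 1) * exp (-(lam * t) / 2) / lam ^ H * upperGamma H (lam * t / 2)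
      = t ^ H * (exp (-(lam * t / 2)) * (lam * t / 2) ^ (-H) * upperGamma H (lam * t / 2) / 2) := by
        have : 0 < t ^ H := by positivity
        rw [hscale, hpow, neg_div]
        field_simp
    _ ≤ t ^ H * besselK H (lam * t) := by gcongr; exact le_besselK hH (by positivity)
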